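/- Let f : V → [0,∞] be lower semicontinuous with respect to the weak topology of V, let A : V → W be a bounded linear operator, let d ∈ W, and define J(x) = f(x) + (1/2)‖Ax − d‖² and J_γ(x) = Q_γ(f)(x) + (1/2)‖Ax − d‖². Suppose ‖A‖² < γ. If x is a local minimizer of J_γ then Q_γ(f)(x) = f(x), hence J_γ(x) = J(x), and x is a local minimizer of J; moreover if x is a strict local minimizer of J_γ then x is a strict local minimizer of J. -/

import Mathlib

open RealInnerProductSpace

set_option linter.unusedSectionVars false
set_option linter.unusedVariables false
set_option maxHeartbeats 2000000



variable {V : Type*} [NormedAddCommGroup V] [InnerProductSpace ℝ V] [CompleteSpace V]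
  [TopologicalSpace.SeparableSpace V]

/-- The quadratic envelope `Q_γ(f)`:
`Q_γ(f)(x) = sup { α − (γ/2)‖x−y‖² : α ∈ ℝ, y ∈ V, α − (γ/2)‖·−y‖² ≤ f }`. -/
noncomputable def Qenv (γ : ℝ) (f : V → EReal) (x : V) : EReal :=
  sSup {v : EReal | ∃ α : ℝ, ∃ y : V,
    (∀ z : V, ((α - γ / 2 * ‖z - y‖ ^ 2 : ℝ) : EReal) ≤ f z) ∧
      v = ((α - γ / 2 * ‖x - y‖ ^ 2 : ℝ) : EReal)}

/-- The transform `S_γ(f)(y) = sup_x ( −f(x) − (γ/2)‖x−y‖² )`. -/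
noncomputable def Senv (γ : ℝ) (f : V → EReal) (y : V) : EReal :=
  ⨆ x : V, (-(f x) - ((γ / 2 * ‖x - y‖ ^ 2 : ℝ) : EReal))

/-- Convexity for extended-real-valued functions. -/
def ERealConvex (g : V → EReal) : Prop :=
  ∀ x y : V, ∀ a b : ℝ, 0 ≤ a → 0 ≤ b → a + b = 1 →
    g (a • x + b • y) ≤ (a : EReal) * g x + (b : EReal) * g y

/-- The lower semicontinuous convex envelope: the (pointwise) greatest lower semicontinuous
convex minorant of `g`. -/
noncomputable def convEnv (g : V → EReal) (x : V) : EReal :=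
  ⨆ h : {h : V → EReal // LowerSemicontinuous h ∧ ERealConvex h ∧ ∀ z, h z ≤ g z}, h.1 x

/-- Lower semicontinuity with respect to the weak topology of `V`. -/
def WeaklyLSC (g : V → EReal) : Prop :=
  LowerSemicontinuous (fun x : WeakSpace ℝ V => g x)

/-- `h` is coercive iff all its sublevel sets are bounded. -/
def Coercive (h : V → EReal) : Prop :=
  ∀ c : ℝ, Bornology.IsBounded {x : V | h x ≤ (c : EReal)}


/-- `J(x) = f(x) + (1/2)‖Ax − d‖²`. -/
noncomputable def Jfun {W : Type*} [NormedAddCommGroup W] [InnerProductSpace ℝ W]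
    (f : V → EReal) (A : V →L[ℝ] W) (d : W) (x : V) : EReal :=
  f x + ((1 / 2 * ‖A x - d‖ ^ 2 : ℝ) : EReal)

/-- `J_γ(x) = Q_γ(f)(x) + (1/2)‖Ax − d‖²`. -/
noncomputable def Jgamma {W : Type*} [NormedAddCommGroup W] [InnerProductSpace ℝ W]
    (γ : ℝ) (f : V → EReal) (A : V →L[ℝ] W) (d : W) (x : V) : EReal :=
  Qenv γ f x + ((1 / 2 * ‖A x - d‖ ^ 2 : ℝ) : EReal)

lemma Qenv_le_self (γ : ℝ) (f : V → EReal) (x : V) : Qenv γ f x ≤ f x := by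
  refine sSup_le ?_
  rintro v ⟨α, y, hc, rfl⟩
  exact hc x

lemma Qenv_nonneg (γ : ℝ) (hγ : 0 ≤ γ) (f : V → EReal) (hf0 : ∀ z, 0 ≤ f z) (x : V) :
    0 ≤ Qenv γ f x := by
  have h0 : ((0 : ℝ) - γ / 2 * ‖x - x‖ ^ 2 : ℝ) = 0 := by simp
  refine le_trans ?_ (le_sSup (s := {v : EReal | ∃ α : ℝ, ∃ y : V,
    (∀ z : V, ((α - γ / 2 * ‖z - y‖ ^ 2 : ℝ) : EReal) ≤ f z) ∧
      v = ((α - γ / 2 * ‖x - y‖ ^ 2 : ℝ) : EReal)}) ⟨0, x, ?_, rfl⟩)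
  · rw [h0]; exact le_refl _
  · intro z
    refine le_trans ?_ (hf0 z)
    have h1 : (0:ℝ) - γ / 2 * ‖z - x‖ ^ 2 ≤ 0 := by
      nlinarith [sq_nonneg ‖z - x‖]
    exact_mod_cast h1

lemma norm_add_smul_sq {E : Type*} [NormedAddCommGroup E] [InnerProductSpace ℝ E]
    (a v : E) (t : ℝ) :
    ‖a + t • v‖ ^ 2 = ‖a‖ ^ 2 + 2 * t * ⟪a, v⟫ + t ^ 2 * ‖v‖ ^ 2 := by
  rw [norm_add_sq_real, real_inner_smul_right, norm_smul]
  simp [mul_pow, sq_abs]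
  ring

lemma crux {W : Type*} [NormedAddCommGroup W] [InnerProductSpace ℝ W] [CompleteSpace W]
    (f : V → EReal) (hf0 : ∀ x, 0 ≤ f x) (hlsc : LowerSemicontinuous f)
    (A : V →L[ℝ] W) (d : W) (γ : ℝ) (hA : ‖A‖ ^ 2 < γ) (x : V) (r : ℝ) (hr : 0 < r)
    (hmin : ∀ w : V, ‖w - x‖ ≤ r → Jgamma γ f A d x ≤ Jgamma γ f A d w) :
    f x ≤ Qenv γ f x := by
  by_contra hns
  rw [not_le] at hns
  have hγ : 0 < γ := lt_of_le_of_lt (sq_nonneg ‖A‖) hA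
  obtain ⟨c₀, hc₀def⟩ : ∃ c₀ : ℝ, c₀ = γ - ‖A‖ ^ 2 := ⟨_, rfl⟩
  have hc₀ : 0 < c₀ := by rw [hc₀def]; linarith
  have hQtop : Qenv γ f x ≠ ⊤ := hns.ne_top
  have hQ0 : 0 ≤ Qenv γ f x := Qenv_nonneg γ hγ.le f hf0 x
  have hQbot : Qenv γ f x ≠ ⊥ := by
    intro h; rw [h] at hQ0; exact absurd hQ0 (by simp)
  obtain ⟨β, hβdef⟩ : ∃ β : ℝ, β = (Qenv γ f x).toReal := ⟨_, rfl⟩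
  have hβ : ((β : ℝ) : EReal) = Qenv γ f x := hβdef ▸ EReal.coe_toReal hQtop hQbot
  set y₀ : V := x - γ⁻¹ • ((ContinuousLinearMap.adjoint A) (A x - d)) with hy₀def
  have hAdj : ∀ v : V, ⟪A x - d, A v⟫ = γ * ⟪x - y₀, v⟫ := by
    intro v
    have h1 : x - y₀ = γ⁻¹ • ((ContinuousLinearMap.adjoint A) (A x - d)) := by
      rw [hy₀def, sub_sub_cancel]
    rw [h1, real_inner_smul_left, ContinuousLinearMap.adjoint_inner_left]
    field_simp
  have hfeas : ∀ (α : ℝ) (y : V),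
      (∀ z : V, ((α - γ / 2 * ‖z - y‖ ^ 2 : ℝ) : EReal) ≤ f z) →
      α - γ / 2 * ‖x - y‖ ^ 2 ≤ β := by
    intro α y hc
    have h1 : ((α - γ / 2 * ‖x - y‖ ^ 2 : ℝ) : EReal) ≤ Qenv γ f x :=
      le_sSup ⟨α, y, hc, rfl⟩
    rw [← hβ] at h1
    exact_mod_cast h1
  have hJx : Jgamma γ f A d x = ((β + 1 / 2 * ‖A x - d‖ ^ 2 : ℝ) : EReal) := by
    rw [Jgamma, ← hβ, ← EReal.coe_add]
  -- the key quantitative minorant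
  have hclub : ∀ (z : V) (e : V), ‖e‖ ≤ c₀ * r / (2 * γ) →
      ((β + γ / 2 * ‖x - (y₀ + e)‖ ^ 2 - γ / 2 * ‖z - (y₀ + e)‖ ^ 2
        - γ ^ 2 * ‖e‖ ^ 2 / (2 * c₀) : ℝ) : EReal) ≤ f z := by
    intro z e he
    by_cases hfz : f z = ⊤
    · rw [hfz]; exact le_top
    have hfzbot : f z ≠ ⊥ := fun h => absurd (h ▸ hf0 z) (by simp)
    obtain ⟨Fz, hFzdef⟩ : ∃ Fz : ℝ, Fz = (f z).toReal := ⟨_, rfl⟩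
    have hFz : f z = ((Fz : ℝ) : EReal) := hFzdef ▸ (EReal.coe_toReal hfz hfzbot).symm
    rw [hFz, EReal.coe_le_coe_iff]
    by_cases hzx : z = x
    · subst hzx
      have hβle : β ≤ Fz := by
        have h2 := Qenv_le_self γ f z
        rw [← hβ, hFz] at h2
        exact_mod_cast h2
      have h3 : 0 ≤ γ ^ 2 * ‖e‖ ^ 2 / (2 * c₀) := by positivity
      linarith
    · set v : V := z - x with hvdef
      have hv : v ≠ 0 := hvdef ▸ sub_ne_zero.mpr hzx
      have hvn : 0 < ‖v‖ := norm_pos_iff.mpr hv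
      obtain ⟨t, htdef⟩ : ∃ t : ℝ, t = min 1 (r / ‖v‖) := ⟨_, rfl⟩
      have ht0 : 0 < t := htdef ▸ lt_min one_pos (div_pos hr hvn)
      have ht1 : t ≤ 1 := htdef ▸ min_le_left 1 (r / ‖v‖)
      have htv : t * ‖v‖ ≤ r := by
        calc t * ‖v‖ ≤ (r / ‖v‖) * ‖v‖ :=
              mul_le_mul_of_nonneg_right (htdef ▸ min_le_right 1 (r / ‖v‖)) hvn.le
        _ = r := div_mul_cancel₀ r hvn.ne'
      obtain ⟨w, hwdef⟩ : ∃ w : V, w = x + t • v := ⟨_, rfl⟩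
      have hzw : z = x + v := by rw [hvdef]; abel
      -- Step 1 : convexity-type upper bound for Qenv at w
      have hQw : Qenv γ f w ≤
          (((1 - t) * β + t * Fz + γ / 2 * (t * (1 - t)) * ‖v‖ ^ 2 : ℝ) : EReal) := by
        refine sSup_le ?_
        rintro u ⟨α, y, hc, rfl⟩
        have h1 : α - γ / 2 * ‖x - y‖ ^ 2 ≤ β := hfeas α y hc
        have h2 : α - γ / 2 * ‖z - y‖ ^ 2 ≤ Fz := by
          have h3 := hc z; rw [hFz] at h3; exact_mod_cast h3
        rw [EReal.coe_le_coe_iff]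
        have hxw : w - y = (x - y) + t • v := by rw [hwdef]; exact add_sub_right_comm x (t • v) y
        have hzexp : ‖z - y‖ ^ 2 = ‖x - y‖ ^ 2 + 2 * ⟪x - y, v⟫ + ‖v‖ ^ 2 := by
          have h4 := norm_add_smul_sq (x - y) v 1
          rw [one_smul] at h4
          rw [hzw, add_sub_right_comm]
          rw [h4]; ring
        rw [hxw, norm_add_smul_sq]
        rw [hzexp] at h2
        have e1 := mul_le_mul_of_nonneg_left h1 (by linarith : (0:ℝ) ≤ 1 - t)
        have e2 := mul_le_mul_of_nonneg_left h2 ht0.le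
        nlinarith [e1, e2]
      -- Step 2 : local minimality at w
      have hwx : ‖w - x‖ ≤ r := by
        rw [hwdef, add_sub_cancel_left, norm_smul, Real.norm_eq_abs, abs_of_pos ht0]
        exact htv
      have hm := hmin w hwx
      rw [hJx] at hm
      have hm2 : ((β + 1 / 2 * ‖A x - d‖ ^ 2 : ℝ) : EReal) ≤
          (((1 - t) * β + t * Fz + γ / 2 * (t * (1 - t)) * ‖v‖ ^ 2
            + 1 / 2 * ‖A w - d‖ ^ 2 : ℝ) : EReal) := by
        refine le_trans hm ?_
        rw [Jgamma, EReal.coe_add]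
        exact add_le_add_left hQw _
      rw [EReal.coe_le_coe_iff] at hm2
      have hAw : A w - d = (A x - d) + t • (A v) := by
        rw [hwdef, map_add, map_smul]
        exact add_sub_right_comm (A x) (t • A v) d
      have hAwsq : ‖A w - d‖ ^ 2
          = ‖A x - d‖ ^ 2 + 2 * t * (γ * ⟪x - y₀, v⟫) + t ^ 2 * ‖A v‖ ^ 2 := by
        rw [hAw, norm_add_smul_sq, hAdj v]
      rw [hAwsq] at hm2
      -- divide by t
      have hdiv : β ≤ Fz + γ / 2 * (1 - t) * ‖v‖ ^ 2 + γ * ⟪x - y₀, v⟫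
          + t / 2 * ‖A v‖ ^ 2 := by
        have h5 : t * β ≤ t * (Fz + γ / 2 * (1 - t) * ‖v‖ ^ 2 + γ * ⟪x - y₀, v⟫
            + t / 2 * ‖A v‖ ^ 2) := by nlinarith [hm2]
        exact le_of_mul_le_mul_left (by linarith [h5]) ht0
      -- the AM-GM step
      have hAv2 : ‖A v‖ ^ 2 ≤ (γ - c₀) * ‖v‖ ^ 2 := by
        have h6 : ‖A v‖ ≤ ‖A‖ * ‖v‖ := A.le_opNorm v
        have h7 : ‖A v‖ ^ 2 ≤ (‖A‖ * ‖v‖) ^ 2 := by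
          nlinarith [norm_nonneg (A v), norm_nonneg A, norm_nonneg v]
        rw [hc₀def]; nlinarith [h7]
      have hev : ⟪e, v⟫ ≤ ‖e‖ * ‖v‖ := real_inner_le_norm e v
      have hkey : γ * ⟪e, v⟫ - γ ^ 2 * ‖e‖ ^ 2 / (2 * c₀)
          ≤ t / 2 * (γ * ‖v‖ ^ 2 - ‖A v‖ ^ 2) := by
        have hev' : γ * ⟪e, v⟫ ≤ γ * (‖e‖ * ‖v‖) := mul_le_mul_of_nonneg_left hev hγ.le
        rcases le_total 1 (r / ‖v‖) with hcase | hcase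
        · have ht : t = 1 := htdef ▸ min_eq_left hcase
          rw [ht]
          have h2c : (0:ℝ) < 2 * c₀ := by linarith
          have hdd : (γ * ⟪e, v⟫ - 1 / 2 * (γ * ‖v‖ ^ 2 - ‖A v‖ ^ 2)) * (2 * c₀)
              ≤ γ ^ 2 * ‖e‖ ^ 2 := by
            nlinarith [sq_nonneg (γ * ‖e‖ - c₀ * ‖v‖), hev', hc₀.le]
          have h3 := (le_div_iff₀ h2c).mpr hdd
          linarith
        · have ht : t = r / ‖v‖ := htdef ▸ min_eq_right hcase
          have htvr : t * ‖v‖ = r := by rw [ht]; field_simp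
          have hγne : γ * ‖e‖ ≤ c₀ * r / 2 := by
            have h8 := (le_div_iff₀ (by linarith : (0:ℝ) < 2*γ)).mp he
            nlinarith
          have hpos : 0 ≤ γ ^ 2 * ‖e‖ ^ 2 / (2 * c₀) := by positivity
          have h1' : γ * ⟪e, v⟫ ≤ (c₀ * r / 2) * ‖v‖ := by
            nlinarith [hev', mul_le_mul_of_nonneg_right hγne hvn.le]
          have hkey2 : t * (c₀ * ‖v‖ ^ 2) = c₀ * r * ‖v‖ := by rw [← htvr]; ring
          have h2' : (c₀ * r / 2) * ‖v‖ ≤ t / 2 * (γ * ‖v‖ ^ 2 - ‖A v‖ ^ 2) := by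
            have h3' : t * (c₀ * ‖v‖ ^ 2) ≤ t * (γ * ‖v‖ ^ 2 - ‖A v‖ ^ 2) := by nlinarith
            linarith [hkey2 ▸ h3']
          linarith
      -- assemble the goal
      have hb : x - (y₀ + e) = (x - y₀) - e := by rw [sub_add_eq_sub_sub]
      have hnz : ‖z - (y₀ + e)‖ ^ 2
          = ‖x - (y₀ + e)‖ ^ 2 + 2 * (⟪x - y₀, v⟫ - ⟪e, v⟫) + ‖v‖ ^ 2 := by
        have h9 : z - (y₀ + e) = (x - (y₀ + e)) + v := by
          rw [hzw]; exact add_sub_right_comm x v (y₀ + e)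
        have h10 := norm_add_smul_sq (x - (y₀ + e)) v 1
        rw [one_smul] at h10
        rw [h9, h10, hb, inner_sub_left]; ring
      rw [hnz]
      linarith [hdiv, hkey]
  -- existence of approximate prox points
  have hex : ∀ ε : ℝ, 0 < ε → ∃ w : V,
      f w < ((β + γ / 2 * ‖x - y₀‖ ^ 2 + ε - γ / 2 * ‖w - y₀‖ ^ 2 : ℝ) : EReal) := by
    intro ε hε
    by_contra hno
    push_neg at hno
    have hcon : (β + γ / 2 * ‖x - y₀‖ ^ 2 + ε) - γ / 2 * ‖x - y₀‖ ^ 2 ≤ β := by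
      refine hfeas (β + γ / 2 * ‖x - y₀‖ ^ 2 + ε) y₀ ?_
      intro z
      have h1 := hno z
      have h2 : ((β + γ / 2 * ‖x - y₀‖ ^ 2 + ε - γ / 2 * ‖z - y₀‖ ^ 2 : ℝ) : EReal)
          = ((β + γ / 2 * ‖x - y₀‖ ^ 2 + ε) - γ / 2 * ‖z - y₀‖ ^ 2 : ℝ) := by norm_num
      rw [← h2]
      exact h1
    linarith
  -- pick a real number strictly between Qenv and f x
  obtain ⟨qE, hq1, hq2⟩ := exists_between hns
  have hqtop : qE ≠ ⊤ := hq2.ne_top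
  have hqbot : qE ≠ ⊥ := hq1.ne_bot
  obtain ⟨q, hqdef⟩ : ∃ q : ℝ, q = qE.toReal := ⟨_, rfl⟩
  have hq : ((q : ℝ) : EReal) = qE := hqdef ▸ EReal.coe_toReal hqtop hqbot
  have hβq : β < q := by
    rw [← hβ, ← hq] at hq1
    exact_mod_cast hq1
  -- lower semicontinuity near x
  have hnear := hlsc x qE hq2
  rw [Metric.eventually_nhds_iff] at hnear
  obtain ⟨ρ, hρ, hball⟩ := hnear
  -- constants
  obtain ⟨N, hNdef⟩ : ∃ N : ℝ, N = ‖x - y₀‖ + 1 := ⟨_, rfl⟩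
  have hN1 : 1 ≤ N := by rw [hNdef]; linarith [norm_nonneg (x - y₀)]
  have hN0 : 0 < N := by linarith
  obtain ⟨D, hDdef⟩ : ∃ D : ℝ, D = q - β := ⟨_, rfl⟩
  have hD : 0 < D := by rw [hDdef]; linarith
  obtain ⟨τ, hτdef⟩ : ∃ τ : ℝ, τ = min (ρ/2) (min 1 (D / (8*γ*N))) := ⟨_, rfl⟩
  have hτ0 : 0 < τ := by
    rw [hτdef]
    refine lt_min (by linarith) (lt_min one_pos (by positivity))
  have hτρ : τ ≤ ρ/2 := hτdef ▸ min_le_left _ _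
  have hτ1 : τ ≤ 1 := le_trans (hτdef ▸ min_le_right _ _) (min_le_left _ _)
  have hτD : τ * (8*γ*N) ≤ D := by
    have h1 : τ ≤ D / (8*γ*N) := le_trans (hτdef ▸ min_le_right _ _) (min_le_right _ _)
    exact (le_div_iff₀ (by positivity)).mp h1
  obtain ⟨s, hsdef⟩ : ∃ s : ℝ, s = min (c₀*r/(2*γ)) (c₀*τ/γ) := ⟨_, rfl⟩
  have hs0 : 0 < s := by rw [hsdef]; exact lt_min (by positivity) (by positivity)
  have hs1 : s ≤ c₀*r/(2*γ) := hsdef ▸ min_le_left _ _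
  have hs2 : γ * s ≤ c₀ * τ := by
    have h1 : s ≤ c₀*τ/γ := hsdef ▸ min_le_right _ _
    have h2 := (le_div_iff₀ hγ).mp h1
    linarith
  obtain ⟨ε, hεdef⟩ : ∃ ε : ℝ, ε = min (D/4) (γ*s*τ/2) := ⟨_, rfl⟩
  have hε0 : 0 < ε := by rw [hεdef]; exact lt_min (by linarith) (by positivity)
  have hεD : ε ≤ D/4 := hεdef ▸ min_le_left _ _
  have hεs : ε ≤ γ*s*τ/2 := hεdef ▸ min_le_right _ _
  -- get the approximate prox point
  obtain ⟨w, hw⟩ := hex ε hε0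
  have hfwtop : f w ≠ ⊤ := by
    intro h; rw [h] at hw; exact absurd hw (by simp)
  have hfwbot : f w ≠ ⊥ := fun h => absurd (h ▸ hf0 w) (by simp)
  obtain ⟨Fw, hFwdef⟩ : ∃ Fw : ℝ, Fw = (f w).toReal := ⟨_, rfl⟩
  have hFw : f w = ((Fw : ℝ) : EReal) := hFwdef ▸ (EReal.coe_toReal hfwtop hfwbot).symm
  have hw' : Fw + γ / 2 * ‖w - y₀‖ ^ 2 < β + γ / 2 * ‖x - y₀‖ ^ 2 + ε := by
    rw [hFw] at hw
    have := EReal.coe_lt_coe_iff.mp hw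
    linarith
  -- distance bound : ‖w - x‖ < τ
  have hdist : ‖w - x‖ ≤ τ := by
    by_cases hwx : w = x
    · rw [hwx]; simp [hτ0.le]
    · obtain ⟨u, hudef⟩ : ∃ u : V, u = w - x := ⟨_, rfl⟩
      have hu : u ≠ 0 := hudef ▸ sub_ne_zero.mpr hwx
      have hun : 0 < ‖u‖ := norm_pos_iff.mpr hu
      obtain ⟨e, hedef⟩ : ∃ e : V, e = (s / ‖u‖) • u := ⟨_, rfl⟩
      have hne : ‖e‖ = s := by
        rw [hedef, norm_smul, Real.norm_eq_abs, abs_of_pos (div_pos hs0 hun)]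
        field_simp
      have h1 := hclub w e (by rw [hne]; exact hs1)
      rw [hFw, EReal.coe_le_coe_iff] at h1
      have e1 : ‖x - (y₀ + e)‖ ^ 2 = ‖x - y₀‖ ^ 2 - 2 * ⟪x - y₀, e⟫ + ‖e‖ ^ 2 := by
        rw [sub_add_eq_sub_sub, norm_sub_sq_real]
      have e2 : ‖w - (y₀ + e)‖ ^ 2 = ‖w - y₀‖ ^ 2 - 2 * ⟪w - y₀, e⟫ + ‖e‖ ^ 2 := by
        rw [sub_add_eq_sub_sub, norm_sub_sq_real]
      have e3 : ⟪w - y₀, e⟫ - ⟪x - y₀, e⟫ = s * ‖u‖ := by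
        rw [← inner_sub_left]
        have h2 : (w - y₀) - (x - y₀) = u := by rw [hudef]; abel
        rw [h2, hedef, real_inner_smul_right, real_inner_self_eq_norm_sq]
        field_simp
      rw [e1, e2, hne] at h1
      -- h1 : β + γ/2 (‖x-y₀‖² - 2⟪x-y₀,e⟫ + s²) - γ/2 (‖w-y₀‖² - 2⟪w-y₀,e⟫ + s²) - γ²s²/(2c₀) ≤ Fw
      have h3 : β + γ/2 * ‖x - y₀‖^2 - γ/2 * ‖w - y₀‖^2 + γ * (s * ‖u‖)
          - γ^2 * s^2 / (2*c₀) ≤ Fw := by nlinarith [h1, e3]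
      have h4 : γ * s * ‖u‖ < ε + γ^2 * s^2 / (2*c₀) := by nlinarith [h3, hw']
      have h5 : γ^2 * s^2 / (2*c₀) ≤ γ * s * τ / 2 := by
        rw [div_le_iff₀ (by linarith : (0:ℝ) < 2*c₀)]
        nlinarith [mul_le_mul_of_nonneg_left hs2 (by positivity : (0:ℝ) ≤ γ * s)]
      have h6 : γ * s * ‖u‖ < γ * s * τ := by linarith
      have h7 : ‖u‖ < τ := lt_of_mul_lt_mul_left h6 (by positivity)
      rw [hudef] at h7
      exact h7.le
  -- final contradiction
  have hwρ : dist w x < ρ := by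
    rw [dist_eq_norm]; linarith
  have hqfw : q < Fw := by
    have h1 := hball hwρ
    rw [← hq, hFw] at h1
    exact_mod_cast h1
  have htri : ‖w - y₀‖ ≤ N - 1 + τ := by
    have h1 : ‖w - y₀‖ ≤ ‖w - x‖ + ‖x - y₀‖ := by
      have := norm_add_le (w - x) (x - y₀)
      have h2 : (w - x) + (x - y₀) = w - y₀ := by abel
      rw [h2] at this; exact this
    rw [hNdef]; linarith
  have htri2 : ‖x - y₀‖ ≤ ‖w - y₀‖ + τ := by
    have h1 : ‖x - y₀‖ ≤ ‖x - w‖ + ‖w - y₀‖ := by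
      have := norm_add_le (x - w) (w - y₀)
      have h2 : (x - w) + (w - y₀) = x - y₀ := by abel
      rw [h2] at this; exact this
    have h3 : ‖x - w‖ = ‖w - x‖ := norm_sub_rev x w
    linarith
  -- γ/2 ‖x-y₀‖² ≤ γ/2 ‖w-y₀‖² + γ τ ‖w-y₀‖ + γ τ²/2
  have hfin : D < ε + γ * τ * ‖w - y₀‖ + γ * τ^2 / 2 := by
    have hsq : ‖x - y₀‖^2 ≤ ‖w - y₀‖^2 + 2*τ*‖w - y₀‖ + τ^2 := by
      nlinarith [htri2, norm_nonneg (x - y₀), norm_nonneg (w - y₀), hτ0.le]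
    have h8 : γ/2 * ‖x - y₀‖^2 ≤ γ/2 * ‖w - y₀‖^2 + γ*τ*‖w - y₀‖ + γ*τ^2/2 := by
      nlinarith [hsq, hγ.le]
    rw [hDdef]
    linarith [hw', hqfw, h8]
  have hlast : γ * τ * ‖w - y₀‖ + γ * τ^2 / 2 ≤ 2 * γ * N * τ := by
    have h9 : ‖w - y₀‖ ≤ N := by nlinarith [htri]
    nlinarith [mul_le_mul_of_nonneg_left h9 (by positivity : (0:ℝ) ≤ γ * τ), hτ1, hτ0.le, hγ.le, hN1]
  have : D < D/4 + D/4 := by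
    have h10 : 2 * γ * N * τ ≤ D/4 := by linarith [hτD]
    linarith [hfin, hεD, hlast, h10]
  linarith


theorem stmt_17 {W : Type*} [NormedAddCommGroup W] [InnerProductSpace ℝ W] [CompleteSpace W]
    [TopologicalSpace.SeparableSpace W]
    (f : V → EReal) (hf0 : ∀ x, 0 ≤ f x) (hwlsc : WeaklyLSC f)
    (A : V →L[ℝ] W) (d : W) (γ : ℝ) (hA : ‖A‖ ^ 2 < γ) (x : V) :
    ((∃ U ∈ nhds x, ∀ y ∈ U, Jgamma γ f A d x ≤ Jgamma γ f A d y) →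
      Qenv γ f x = f x ∧ Jgamma γ f A d x = Jfun f A d x ∧
        ∃ U ∈ nhds x, ∀ y ∈ U, Jfun f A d x ≤ Jfun f A d y) ∧
    ((∃ U ∈ nhds x, ∀ y ∈ U, y ≠ x → Jgamma γ f A d x < Jgamma γ f A d y) →
      ∃ U ∈ nhds x, ∀ y ∈ U, y ≠ x → Jfun f A d x < Jfun f A d y) := by
  have hlsc : LowerSemicontinuous f := by
    intro x' c hc
    exact ((toWeakSpaceCLM ℝ V).continuous.tendsto x').eventually (hwlsc x' c hc)
  have main : (∃ U ∈ nhds x, ∀ y ∈ U, Jgamma γ f A d x ≤ Jgamma γ f A d y) →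
      Qenv γ f x = f x ∧ Jgamma γ f A d x = Jfun f A d x ∧
        ∃ U ∈ nhds x, ∀ y ∈ U, Jfun f A d x ≤ Jfun f A d y := by
    intro hmin
    obtain ⟨U, hU, hm⟩ := hmin
    obtain ⟨r₀, hr₀, hballU⟩ := Metric.mem_nhds_iff.mp hU
    have hmin' : ∀ w : V, ‖w - x‖ ≤ r₀/2 → Jgamma γ f A d x ≤ Jgamma γ f A d w := by
      intro w hw
      refine hm w (hballU ?_)
      rw [Metric.mem_ball, dist_eq_norm]
      linarith
    have hQ : Qenv γ f x = f x :=
      le_antisymm (Qenv_le_self γ f x)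
        (crux f hf0 hlsc A d γ hA x (r₀/2) (by linarith) hmin')
    refine ⟨hQ, ?_, ?_⟩
    · rw [Jgamma, Jfun, hQ]
    · refine ⟨U, hU, fun y hy => ?_⟩
      have h1 : Jfun f A d x = Jgamma γ f A d x := by rw [Jgamma, Jfun, hQ]
      rw [h1]
      exact le_trans (hm y hy) (add_le_add_left (Qenv_le_self γ f y) _)
  constructor
  · exact main
  · intro hstrict
    obtain ⟨U, hU, hs⟩ := hstrict
    have hmin : ∃ U ∈ nhds x, ∀ y ∈ U, Jgamma γ f A d x ≤ Jgamma γ f A d y := by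
      refine ⟨U, hU, fun y hy => ?_⟩
      by_cases h : y = x
      · rw [h]
      · exact (hs y hy h).le
    obtain ⟨hQ, hJ, -⟩ := main hmin
    refine ⟨U, hU, fun y hy hne => ?_⟩
    calc Jfun f A d x = Jgamma γ f A d x := hJ.symm
      _ < Jgamma γ f A d y := hs y hy hne
      _ ≤ Jfun f A d y := add_le_add_left (Qenv_le_self γ f y) _
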